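/- Coupled y–z cross-term bound with gossip contraction: let χ ≥ 1, σ₂ > 0, ζ = 1/2, let W be a gossip map with parameter χ, and suppose y* + z* ∈ L_c. If y^k, y^{k+1}, y_g^k, z_g^k, y_f^{k+1}, z_f^{k+1} ∈ E satisfy y_f^{k+1} = y_g^k + σ₂(y^{k+1} − y^k) and z_f^{k+1} = z_g^k − ζ W(y_g^k + z_g^k), then −2⟨y^{k+1} − y^k, y_g^k + z_g^k − (y* + z*)⟩ ≤ (1/σ₂)‖y_g^k + z_g^k − (y* + z*)‖² − (1/σ₂)‖y_f^{k+1} + z_f^{k+1} − (y* + z*)‖² + 2σ₂‖y^{k+1} − y^k‖² − (1/(2σ₂χ))‖y_g^k + z_g^k‖_P². -/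

import Mathlib

open scoped InnerProductSpace BigOperators

noncomputable section

/-- The product space `E = (ℝ^d)^n` with inner product `⟨x, y⟩ = ∑ᵢ ⟨xᵢ, yᵢ⟩`. -/
abbrev E (n d : ℕ) : Type := PiLp 2 (fun _ : Fin n => EuclideanSpace ℝ (Fin d))

/-- The orthogonal projection `P` onto `L_c^⊥ = {z : ∑ᵢ zᵢ = 0}`:
`(Px)ᵢ = xᵢ − (1/n) ∑ⱼ xⱼ`. -/
def projP {n d : ℕ} (x : E n d) : E n d := WithLp.toLp 2 (fun i => x i - (n : ℝ)⁻¹ • ∑ j, x j)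

/-- `W : E → E` is a gossip map with parameter `χ`: it is given by an `n × n` matrix acting
blockwise (i.e. `W = W̃ ⊗ I_d`), it vanishes on the consensus space `L_c`, its range lies in
`L_c^⊥`, and `‖Wv − v‖² ≤ (1 − χ⁻¹)‖v‖²` for all `v ∈ L_c^⊥`. -/
def IsGossip {n d : ℕ} (χ : ℝ) (W : E n d → E n d) : Prop :=
  (∃ Wt : Matrix (Fin n) (Fin n) ℝ, ∀ (v : E n d) (i : Fin n), W v i = ∑ j, Wt i j • v j) ∧
  (∀ v : E n d, (∀ i j : Fin n, v i = v j) → W v = 0) ∧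
  (∀ v : E n d, ∑ i, W v i = 0) ∧
  (∀ v : E n d, ∑ i, v i = 0 → ‖W v - v‖ ^ 2 ≤ (1 - χ⁻¹) * ‖v‖ ^ 2)

/-- Bregman divergence `D_F(x, y) = F(x) − F(y) − ⟨∇F(y), x − y⟩` (here `G = ∇F`). -/
def DF {n d : ℕ} (F : E n d → ℝ) (G : E n d → E n d) (x y : E n d) : ℝ :=
  F x - F y - ⟪G y, x - y⟫_ℝ

/-- Primal Lyapunov function
`Ψ_x = (1/η + α)‖x − x*‖² + (2/τ₂)(D_F(x_f, x*) − (ν/2)‖x_f − x*‖²)`. -/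
def PsiX {n d : ℕ} (F : E n d → ℝ) (G : E n d → E n d) (η α τ₂ ν : ℝ)
    (xs xk xfk : E n d) : ℝ :=
  (1 / η + α) * ‖xk - xs‖ ^ 2 + (2 / τ₂) * (DF F G xfk xs - (ν / 2) * ‖xfk - xs‖ ^ 2)

/-- Dual Lyapunov function `Ψ_yz` (with `ẑ = z − P m`):
`(1/θ + β/2)‖y − y*‖² + (β/(2σ₂))‖y_f − y*‖² + (1/γ)‖ẑ − z*‖² + (4/(3γ))‖m‖_P²
  + (1/(νσ₂))‖y_f + z_f − (y* + z*)‖²`. -/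
def PsiYZ {n d : ℕ} (θ β σ₂ γ ν : ℝ) (ys zs yk yfk zk zfk mk : E n d) : ℝ :=
  (1 / θ + β / 2) * ‖yk - ys‖ ^ 2 + (β / (2 * σ₂)) * ‖yfk - ys‖ ^ 2
    + (1 / γ) * ‖zk - projP mk - zs‖ ^ 2 + (4 / (3 * γ)) * ‖projP mk‖ ^ 2
    + (1 / (ν * σ₂)) * ‖yfk + zfk - (ys + zs)‖ ^ 2

/-! With `s = y_g + z_g`, `c = y* + z*`, `a = y^{k+1} − y^k` and `u = W s` one has
`y_f + z_f − c = (s − c) + (σ₂ a − u/2)`. Since `W` kills consensus vectors and lands in `L_c^⊥`,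
`u = W (P s)` and `⟨s − c, u⟩ = ⟨P s, u⟩`; expanding the contraction `‖u − P s‖² ≤ (1 − χ⁻¹)‖P s‖²`
gives `χ⁻¹‖P s‖² ≤ 2⟨P s, u⟩ − ‖u‖²`. The remaining term `‖σ₂ a − u/2‖²` is paid for by the
parallelogram bound `‖σ₂ a − u/2‖² ≤ 2σ₂²‖a‖² + ‖u‖²/2`. -/

section InnerProductSpace

variable {F : Type*} [NormedAddCommGroup F] [InnerProductSpace ℝ F]

lemma norm_sub_sq_le_two_mul_add (x y : F) : ‖x - y‖ ^ 2 ≤ 2 * ‖x‖ ^ 2 + 2 * ‖y‖ ^ 2 := by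
  nlinarith [parallelogram_law_with_norm ℝ x y, sq_nonneg ‖x + y‖]

lemma inv_mul_norm_sq_le_of_norm_sub_sq_le {χ : ℝ} {u v : F}
    (h : ‖u - v‖ ^ 2 ≤ (1 - χ⁻¹) * ‖v‖ ^ 2) : χ⁻¹ * ‖v‖ ^ 2 ≤ 2 * ⟪v, u⟫_ℝ - ‖u‖ ^ 2 := by
  rw [norm_sub_sq_real, real_inner_comm] at h
  linarith

lemma neg_two_inner_le_of_inner_eq_of_mul_norm_sq_le {σ κ : ℝ} (hσ : 0 < σ) {a r u v : F}
    (hr : ⟪r, u⟫_ℝ = ⟪v, u⟫_ℝ) (hκ : κ * ‖v‖ ^ 2 ≤ 2 * ⟪v, u⟫_ℝ - ‖u‖ ^ 2) :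
    -2 * ⟪a, r⟫_ℝ ≤
      (1 / σ) * ‖r‖ ^ 2 - (1 / σ) * ‖r + (σ • a - (1 / 2 : ℝ) • u)‖ ^ 2
        + 2 * σ * ‖a‖ ^ 2 - (κ / (2 * σ)) * ‖v‖ ^ 2 := by
  set w := σ • a - (1 / 2 : ℝ) • u
  have hexpand : ‖r + w‖ ^ 2 = ‖r‖ ^ 2 + 2 * σ * ⟪a, r⟫_ℝ - ⟪v, u⟫_ℝ + ‖w‖ ^ 2 := by
    rw [norm_add_sq_real, inner_sub_right, real_inner_smul_right, real_inner_smul_right, hr,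
      real_inner_comm a r]
    ring
  have hw : ‖w‖ ^ 2 ≤ 2 * σ ^ 2 * ‖a‖ ^ 2 + ‖u‖ ^ 2 / 2 :=
    calc ‖w‖ ^ 2 ≤ 2 * ‖σ • a‖ ^ 2 + 2 * ‖(1 / 2 : ℝ) • u‖ ^ 2 := norm_sub_sq_le_two_mul_add _ _
      _ = 2 * σ ^ 2 * ‖a‖ ^ 2 + ‖u‖ ^ 2 / 2 := by
        rw [norm_smul_of_nonneg hσ.le, norm_smul_of_nonneg (by norm_num)]
        ring
  have hslack : 0 ≤ ⟪v, u⟫_ℝ - ‖w‖ ^ 2 + 2 * σ ^ 2 * ‖a‖ ^ 2 - κ / 2 * ‖v‖ ^ 2 := by linarith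
  rw [hexpand, ← sub_nonneg]
  refine (div_nonneg hslack hσ.le).trans_eq ?_
  field_simp
  ring

end InnerProductSpace

lemma inner_eq_zero_of_forall_eq_of_sum_eq_zero {ι F : Type*} [Fintype ι]
    [NormedAddCommGroup F] [InnerProductSpace ℝ F] {x y : PiLp 2 (fun _ : ι => F)}
    (hx : ∀ i j, x i = x j) (hy : ∑ i, y i = 0) : ⟪x, y⟫_ℝ = 0 := by
  rcases isEmpty_or_nonempty ι with _ | ⟨⟨i₀⟩⟩
  · simp [PiLp.inner_apply]
  · rw [PiLp.inner_apply, Finset.sum_congr rfl fun i _ => by rw [hx i i₀], ← inner_sum, hy,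
      inner_zero_right]

section Gossip

variable {n d : ℕ}

lemma sum_projP (x : E n d) : ∑ i, projP x i = 0 := by
  rcases Nat.eq_zero_or_pos n with rfl | hn
  · simp
  simp only [projP, PiLp.toLp_apply, Finset.sum_sub_distrib, Finset.sum_const, Finset.card_univ,
    Fintype.card_fin, ← Nat.cast_smul_eq_nsmul ℝ, smul_smul]
  rw [mul_inv_cancel₀ (by positivity), one_smul, sub_self]

lemma sub_projP_apply_eq (x : E n d) (i j : Fin n) : (x - projP x) i = (x - projP x) j := by
  simp [projP]

namespace IsGossip

variable {χ : ℝ} {W : E n d → E n d}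

lemma map_sub (hW : IsGossip χ W) (x y : E n d) : W (x - y) = W x - W y := by
  obtain ⟨Wt, hWt⟩ := hW.1
  ext1 i
  simp [hWt, smul_sub, Finset.sum_sub_distrib]

lemma map_projP (hW : IsGossip χ W) (x : E n d) : W (projP x) = W x := by
  have hker : W (x - projP x) = 0 := hW.2.1 _ (sub_projP_apply_eq x)
  rw [hW.map_sub] at hker
  exact (sub_eq_zero.mp hker).symm

lemma inner_sub_map_eq_inner_projP (hW : IsGossip χ W) {c : E n d} (hc : ∀ i j, c i = c j)
    (x : E n d) : ⟪x - c, W x⟫_ℝ = ⟪projP x, W x⟫_ℝ := by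
  have hconst : ∀ i j, (x - projP x - c) i = (x - projP x - c) j := fun i j => by
    show (x - projP x) i - c i = (x - projP x) j - c j
    rw [sub_projP_apply_eq x i j, hc i j]
  have h := inner_eq_zero_of_forall_eq_of_sum_eq_zero hconst (hW.2.2.1 x)
  rw [sub_right_comm, inner_sub_left] at h
  linarith

lemma inv_mul_norm_projP_sq_le (hW : IsGossip χ W) (x : E n d) :
    χ⁻¹ * ‖projP x‖ ^ 2 ≤ 2 * ⟪projP x, W x⟫_ℝ - ‖W x‖ ^ 2 := by
  have h := hW.2.2.2 (projP x) (sum_projP x)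
  rw [hW.map_projP] at h
  exact inv_mul_norm_sq_le_of_norm_sub_sq_le h

end IsGossip

end Gossip

theorem adom_plus_coupled_cross_term_general
    {n d : ℕ}
    (χ σ₂ ζ : ℝ) (hσ₂ : 0 < σ₂) (hζ : ζ = 1 / 2)
    (W : E n d → E n d) (hW : IsGossip χ W)
    (ys zs : E n d) (hyszs : ∀ i j : Fin n, (ys + zs) i = (ys + zs) j)
    (yk yk1 ygk zgk yfk1 zfk1 : E n d)
    (hyf : yfk1 = ygk + σ₂ • (yk1 - yk))
    (hzf : zfk1 = zgk - ζ • W (ygk + zgk)) :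
    -2 * ⟪yk1 - yk, ygk + zgk - (ys + zs)⟫_ℝ ≤
      (1 / σ₂) * ‖ygk + zgk - (ys + zs)‖ ^ 2
        - (1 / σ₂) * ‖yfk1 + zfk1 - (ys + zs)‖ ^ 2
        + 2 * σ₂ * ‖yk1 - yk‖ ^ 2
        - (1 / (2 * σ₂ * χ)) * ‖projP (ygk + zgk)‖ ^ 2 := by
  have hf : yfk1 + zfk1 - (ys + zs) =
      (ygk + zgk - (ys + zs)) + (σ₂ • (yk1 - yk) - (1 / 2 : ℝ) • W (ygk + zgk)) := by
    subst hyf hzf hζ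
    abel
  have hcoef : 1 / (2 * σ₂ * χ) = χ⁻¹ / (2 * σ₂) := by ring
  rw [hf, hcoef]
  exact neg_two_inner_le_of_inner_eq_of_mul_norm_sq_le hσ₂ (hW.inner_sub_map_eq_inner_projP hyszs _)
    (hW.inv_mul_norm_projP_sq_le _)

/-- **Coupled y–z cross-term bound with gossip contraction.**
Let `χ ≥ 1`, `σ₂ > 0`, `ζ = 1/2`, `W` a gossip map with parameter `χ`, `y* + z* ∈ L_c`, and
suppose `y_f^{k+1} = y_g^k + σ₂(y^{k+1} − y^k)` and `z_f^{k+1} = z_g^k − ζ W(y_g^k + z_g^k)`.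
Then `−2⟨y^{k+1} − y^k, y_g^k + z_g^k − (y* + z*)⟩
  ≤ (1/σ₂)‖y_g^k + z_g^k − (y* + z*)‖² − (1/σ₂)‖y_f^{k+1} + z_f^{k+1} − (y* + z*)‖²
    + 2σ₂‖y^{k+1} − y^k‖² − (1/(2σ₂χ))‖y_g^k + z_g^k‖_P²`. -/
theorem adom_plus_coupled_cross_term
    {n d : ℕ} (hn : 1 ≤ n) (hd : 1 ≤ d)
    (χ σ₂ ζ : ℝ) (hχ : 1 ≤ χ) (hσ₂ : 0 < σ₂) (hζ : ζ = 1 / 2)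
    (W : E n d → E n d) (hW : IsGossip χ W)
    (ys zs : E n d) (hyszs : ∀ i j : Fin n, (ys + zs) i = (ys + zs) j)
    (yk yk1 ygk zgk yfk1 zfk1 : E n d)
    (hyf : yfk1 = ygk + σ₂ • (yk1 - yk))
    (hzf : zfk1 = zgk - ζ • W (ygk + zgk)) :
    -2 * ⟪yk1 - yk, ygk + zgk - (ys + zs)⟫_ℝ ≤
      (1 / σ₂) * ‖ygk + zgk - (ys + zs)‖ ^ 2
        - (1 / σ₂) * ‖yfk1 + zfk1 - (ys + zs)‖ ^ 2
        + 2 * σ₂ * ‖yk1 - yk‖ ^ 2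
        - (1 / (2 * σ₂ * χ)) * ‖projP (ygk + zgk)‖ ^ 2 :=
  adom_plus_coupled_cross_term_general χ σ₂ ζ hσ₂ hζ W hW ys zs hyszs yk yk1 ygk zgk yfk1 zfk1 hyf
    hzf
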